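/- In the iterative decomposition procedure for a row-stochastic matrix P, if P^m ≠ 0 then the number of zero entries of P^{m+1} is strictly greater than the number of zero entries of P^m. Consequently the procedure terminates: there exists n* ≤ |I|·|J| with P^{n*} = 0. -/

import Mathlib

/-- The maximum of row `i` of the matrix `P`. -/
noncomputable def rowMax {I J : Type*} [Fintype J] [Nonempty J]
    (P : I → J → ℝ) (i : I) : ℝ :=
  Finset.univ.sup' Finset.univ_nonempty (P i)

open Classical in
/-- The first column index achieving the maximum of row `i` of `P`. -/
noncomputable def argmaxRow {I J : Type*} [Fintype J] [Nonempty J] [LinearOrder J]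
    (P : I → J → ℝ) (i : I) : J :=
  (Finset.univ.filter fun j => P i j = rowMax P i).min' (by
    obtain ⟨b, _, hb⟩ := Finset.exists_mem_eq_sup' (Finset.univ_nonempty) (P i)
    exact ⟨b, Finset.mem_filter.mpr ⟨Finset.mem_univ b, hb.symm⟩⟩)

/-- The greedy coefficient `α = min_i max_j P i j`. -/
noncomputable def alphaCoef {I J : Type*} [Fintype I] [Nonempty I] [Fintype J] [Nonempty J]
    (P : I → J → ℝ) : ℝ :=
  Finset.univ.inf' Finset.univ_nonempty (rowMax P)

/-- The 0-1 matrix with a `1` in row `i` exactly at the first column achieving the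
row maximum of `P`. -/
noncomputable def Lmat {I J : Type*} [Fintype J] [Nonempty J] [LinearOrder J]
    (P : I → J → ℝ) : I → J → ℝ :=
  fun i j => if j = argmaxRow P i then 1 else 0

/-- The iterative greedy decomposition procedure:
`P⁰ = P`, `P^{m+1} = P^m - α(P^m) • L(P^m)`. -/
noncomputable def iterP {I J : Type*} [Fintype I] [Nonempty I]
    [Fintype J] [Nonempty J] [LinearOrder J]
    (P : I → J → ℝ) : ℕ → I → J → ℝ
  | 0 => P
  | m + 1 => fun i j => iterP P m i j - alphaCoef (iterP P m) * Lmat (iterP P m) i j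

/-!
Write `Q` for the current matrix and `α = min_i max_j Q i j`. Subtracting `α` at the first
argmax of every row keeps `Q` nonnegative, since `α` is at most every row maximum, and keeps
all row sums equal. A zero entry stays zero: if it is the argmax of its row, that row is zero,
so `α = 0`. A new zero appears at the argmax of a row whose maximum is `α`, and that entry was
not zero before: equal row sums and `Q ≠ 0` force every row maximum to be positive. The number
of zero entries, which is at most `|I|·|J|`, thus increases strictly until `Q = 0`.
-/

section RowMax

variable {I J : Type*} [Fintype J] [Nonempty J]

theorem le_rowMax (P : I → J → ℝ) (i : I) (j : J) : P i j ≤ rowMax P i :=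
  Finset.le_sup' _ (Finset.mem_univ j)

theorem rowMax_pos_of_sum_pos {P : I → J → ℝ} {i : I} (hP : 0 < ∑ j, P i j) :
    0 < rowMax P i := by
  by_contra! hle
  have : ∑ j, P i j ≤ 0 := Finset.sum_nonpos fun j _ => (le_rowMax P i j).trans hle
  linarith

theorem apply_argmaxRow [LinearOrder J] (P : I → J → ℝ) (i : I) :
    P i (argmaxRow P i) = rowMax P i := by
  classical
  unfold argmaxRow
  exact (Finset.mem_filter.mp
    (Finset.min'_mem (Finset.univ.filter fun j => P i j = rowMax P i) _)).2

theorem sum_Lmat [LinearOrder J] (P : I → J → ℝ) (i : I) : ∑ j, Lmat P i j = 1 := by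
  simp [Lmat]

variable [Fintype I] [Nonempty I]

theorem alphaCoef_le_rowMax (P : I → J → ℝ) (i : I) : alphaCoef P ≤ rowMax P i :=
  Finset.inf'_le _ (Finset.mem_univ i)

theorem exists_alphaCoef_eq_rowMax (P : I → J → ℝ) : ∃ i, alphaCoef P = rowMax P i := by
  obtain ⟨i, -, hi⟩ := Finset.exists_mem_eq_inf' Finset.univ_nonempty (rowMax P)
  exact ⟨i, hi⟩

theorem alphaCoef_nonneg {P : I → J → ℝ} (hP : ∀ i j, 0 ≤ P i j) : 0 ≤ alphaCoef P :=
  Finset.le_inf' _ _ fun i _ => (hP i (Classical.arbitrary J)).trans (le_rowMax P i _)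

end RowMax

section ZeroEntries

variable {I J : Type*} [Fintype I] [Fintype J]

open Classical in
noncomputable def zeroEntries (Q : I → J → ℝ) : Finset (I × J) :=
  Finset.univ.filter fun p => Q p.1 p.2 = 0

@[simp]
theorem mem_zeroEntries {Q : I → J → ℝ} {p : I × J} : p ∈ zeroEntries Q ↔ Q p.1 p.2 = 0 := by
  simp [zeroEntries]

theorem card_zeroEntries_le (Q : I → J → ℝ) :
    (zeroEntries Q).card ≤ Fintype.card I * Fintype.card J :=
  (Finset.card_filter_le _ _).trans (by rw [Finset.card_univ, Fintype.card_prod])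

end ZeroEntries

section GreedyStep

variable {I J : Type*} [Fintype I] [Nonempty I] [Fintype J] [Nonempty J] [LinearOrder J]

noncomputable def greedyStep (Q : I → J → ℝ) : I → J → ℝ :=
  fun i j => Q i j - alphaCoef Q * Lmat Q i j

theorem iterP_succ (P : I → J → ℝ) (m : ℕ) : iterP P (m + 1) = greedyStep (iterP P m) := rfl

theorem greedyStep_apply_argmaxRow (Q : I → J → ℝ) (i : I) :
    greedyStep Q i (argmaxRow Q i) = rowMax Q i - alphaCoef Q := by
  simp [greedyStep, Lmat, apply_argmaxRow]

theorem greedyStep_apply_of_ne {Q : I → J → ℝ} {i : I} {j : J} (hj : j ≠ argmaxRow Q i) :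
    greedyStep Q i j = Q i j := by
  simp [greedyStep, Lmat, hj]

theorem greedyStep_nonneg {Q : I → J → ℝ} (hQ : ∀ i j, 0 ≤ Q i j) (i : I) (j : J) :
    0 ≤ greedyStep Q i j := by
  by_cases hj : j = argmaxRow Q i
  · rw [hj, greedyStep_apply_argmaxRow]
    exact sub_nonneg.mpr (alphaCoef_le_rowMax Q i)
  · rw [greedyStep_apply_of_ne hj]
    exact hQ i j

theorem sum_greedyStep (Q : I → J → ℝ) (i : I) :
    ∑ j, greedyStep Q i j = ∑ j, Q i j - alphaCoef Q := by
  simp only [greedyStep, Finset.sum_sub_distrib, ← Finset.mul_sum, sum_Lmat, mul_one]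

theorem greedyStep_eq_zero_of_eq_zero {Q : I → J → ℝ} (hQ : ∀ i j, 0 ≤ Q i j) {i : I} {j : J}
    (hij : Q i j = 0) : greedyStep Q i j = 0 := by
  by_cases hj : j = argmaxRow Q i
  · have hmax : rowMax Q i = 0 := by rw [← apply_argmaxRow, ← hj, hij]
    have hα : alphaCoef Q = 0 :=
      le_antisymm (hmax ▸ alphaCoef_le_rowMax Q i) (alphaCoef_nonneg hQ)
    rw [hj, greedyStep_apply_argmaxRow, hmax, hα, sub_zero]
  · rw [greedyStep_apply_of_ne hj, hij]

theorem exists_greedyStep_eq_zero_of_ne_zero {Q : I → J → ℝ} {c : ℝ} (hQ : ∀ i j, 0 ≤ Q i j)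
    (hc : ∀ i, ∑ j, Q i j = c) (hne : ∃ i j, Q i j ≠ 0) :
    ∃ i j, Q i j ≠ 0 ∧ greedyStep Q i j = 0 := by
  obtain ⟨i₁, j₁, hQ₁⟩ := hne
  have hc_pos : 0 < c := hc i₁ ▸ (lt_of_le_of_ne (hQ i₁ j₁) hQ₁.symm).trans_le
    (Finset.single_le_sum (fun j _ => hQ i₁ j) (Finset.mem_univ j₁))
  obtain ⟨i, hi⟩ := exists_alphaCoef_eq_rowMax Q
  refine ⟨i, argmaxRow Q i, ?_, by rw [greedyStep_apply_argmaxRow, hi, sub_self]⟩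
  rw [apply_argmaxRow Q i]
  exact (rowMax_pos_of_sum_pos ((hc i).symm ▸ hc_pos)).ne'

theorem zeroEntries_ssubset_greedyStep {Q : I → J → ℝ} {c : ℝ} (hQ : ∀ i j, 0 ≤ Q i j)
    (hc : ∀ i, ∑ j, Q i j = c) (hne : ∃ i j, Q i j ≠ 0) :
    zeroEntries Q ⊂ zeroEntries (greedyStep Q) := by
  have hsub : zeroEntries Q ⊆ zeroEntries (greedyStep Q) := fun p hp =>
    mem_zeroEntries.mpr (greedyStep_eq_zero_of_eq_zero hQ (mem_zeroEntries.mp hp))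
  obtain ⟨i, j, hQij, hij⟩ := exists_greedyStep_eq_zero_of_ne_zero hQ hc hne
  exact (Finset.ssubset_iff_of_subset hsub).mpr
    ⟨(i, j), mem_zeroEntries.mpr hij, fun h => hQij (mem_zeroEntries.mp h)⟩

end GreedyStep

section Iteration

variable {I J : Type*} [Fintype I] [Nonempty I] [Fintype J] [Nonempty J] [LinearOrder J]

theorem iterP_nonneg {P : I → J → ℝ} (hP : ∀ i j, 0 ≤ P i j) (m : ℕ) (i : I) (j : J) :
    0 ≤ iterP P m i j := by
  induction m generalizing i j with
  | zero => exact hP i j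
  | succ m ih => rw [iterP_succ]; exact greedyStep_nonneg ih i j

theorem exists_sum_iterP_eq {P : I → J → ℝ} {c : ℝ} (hP : ∀ i, ∑ j, P i j = c) (m : ℕ) :
    ∃ c', ∀ i, ∑ j, iterP P m i j = c' := by
  induction m with
  | zero => exact ⟨c, hP⟩
  | succ m ih =>
    obtain ⟨c', hc'⟩ := ih
    exact ⟨c' - alphaCoef (iterP P m), fun i => by rw [iterP_succ, sum_greedyStep, hc']⟩

end Iteration

theorem exists_le_of_lt_succ_of_le_bound {f : ℕ → ℕ} {p : ℕ → Prop} {N : ℕ}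
    (hf : ∀ m, ¬ p m → f m < f (m + 1)) (hN : ∀ m, f m ≤ N) : ∃ n ≤ N, p n := by
  by_contra! hp
  have hgrow : ∀ m ≤ N + 1, m ≤ f m := by
    intro m hm
    induction m with
    | zero => exact Nat.zero_le _
    | succ m ih => exact (ih (by omega)).trans_lt (hf m (hp m (by omega)))
  exact absurd ((hgrow (N + 1) le_rfl).trans (hN (N + 1))) (by omega)

open Classical in
theorem iterP_zeros_strict_mono_and_terminates_general
    {I J : Type*} [Fintype I] [Nonempty I] [Fintype J] [Nonempty J] [LinearOrder J]
    (P : I → J → ℝ)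
    (h0 : ∀ i j, 0 ≤ P i j)
    (hrow : ∀ i, ∑ j, P i j = 1) :
    (∀ m : ℕ, ¬ (∀ i j, iterP P m i j = 0) →
        (Finset.univ.filter fun p : I × J => iterP P m p.1 p.2 = 0).card <
        (Finset.univ.filter fun p : I × J => iterP P (m + 1) p.1 p.2 = 0).card) ∧
    (∃ n : ℕ, n ≤ Fintype.card I * Fintype.card J ∧ ∀ i j, iterP P n i j = 0) := by
  have hstep : ∀ m : ℕ, ¬ (∀ i j, iterP P m i j = 0) →
      (zeroEntries (iterP P m)).card < (zeroEntries (iterP P (m + 1))).card := by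
    intro m hm
    push Not at hm
    obtain ⟨c, hc⟩ := exists_sum_iterP_eq hrow m
    rw [iterP_succ]
    exact Finset.card_lt_card (zeroEntries_ssubset_greedyStep (iterP_nonneg h0 m) hc hm)
  exact ⟨hstep, exists_le_of_lt_succ_of_le_bound hstep fun m => card_zeroEntries_le _⟩

open Classical in
/-- In the iterative decomposition procedure, if `P^m ≠ 0` then `P^{m+1}` has strictly
more zero entries than `P^m`; consequently the procedure terminates: there is
`n* ≤ |I|·|J|` with `P^{n*} = 0`. -/
theorem iterP_zeros_strict_mono_and_terminates
    {I J : Type*} [Fintype I] [Nonempty I] [Fintype J] [Nonempty J] [LinearOrder J]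
    (P : I → J → ℝ)
    (h0 : ∀ i j, 0 ≤ P i j) (h1 : ∀ i j, P i j ≤ 1)
    (hrow : ∀ i, ∑ j, P i j = 1) :
    (∀ m : ℕ, ¬ (∀ i j, iterP P m i j = 0) →
        (Finset.univ.filter fun p : I × J => iterP P m p.1 p.2 = 0).card <
        (Finset.univ.filter fun p : I × J => iterP P (m + 1) p.1 p.2 = 0).card) ∧
    (∃ n : ℕ, n ≤ Fintype.card I * Fintype.card J ∧ ∀ i j, iterP P n i j = 0) :=
  iterP_zeros_strict_mono_and_terminates_general P h0 hrow
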